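/- arXiv:2209.07792 — 2 statements merged into one kernel-verified Lean document; each statement's English description precedes it below -/
import Mathlib

section
/- Let V ⊆ ℝ^n be a finite set, let P = conv(V), and assume every point of V is an extreme point of P. Let u, v, w be three distinct points of V and set P' = conv(V ∖ {w}). If {u,v} is an edge of P' but not an edge of P, then both {u,w} and {v,w} are edges of P. -/
open Set

noncomputable section

/-- `V` is the vertex set of a full-dimensional polytope in `ℝ^d`:
`V` is finite, affinely spans `ℝ^d`, and every point of `V` is an extreme
point of `conv V`. -/
def IsPolytopeVertexSet (d : ℕ) (V : Set (EuclideanSpace ℝ (Fin d))) : Prop :=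
  V.Finite ∧ affineSpan ℝ V = ⊤ ∧
    ∀ x ∈ V, x ∈ Set.extremePoints ℝ (convexHull ℝ V)

/-- The polytope `conv V` is simplicial: for every proper exposed face `F`,
the vertices lying on `F` are affinely independent. -/
def IsSimplicialPolytope (d : ℕ) (V : Set (EuclideanSpace ℝ (Fin d))) : Prop :=
  IsPolytopeVertexSet d V ∧
    ∀ F : Set (EuclideanSpace ℝ (Fin d)),
      IsExposed ℝ (convexHull ℝ V) F → F ≠ convexHull ℝ V →
        AffineIndependent ℝ
          ((↑) : (V ∩ F : Set (EuclideanSpace ℝ (Fin d))) → EuclideanSpace ℝ (Fin d))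

/-- `{u, v}` is an edge of the polytope `conv V`: `u` and `v` are distinct
vertices and the segment `[u, v]` is an exposed face of `conv V`. -/
def IsPolytopeEdge (d : ℕ) (V : Set (EuclideanSpace ℝ (Fin d)))
    (u v : EuclideanSpace ℝ (Fin d)) : Prop :=
  u ∈ V ∧ v ∈ V ∧ u ≠ v ∧ IsExposed ℝ (convexHull ℝ V) (segment ℝ u v)

/-- The edge set of the graph of the polytope `conv V`, as a set of
unordered pairs. -/
def polyEdges (d : ℕ) (V : Set (EuclideanSpace ℝ (Fin d))) :
    Set (Sym2 (EuclideanSpace ℝ (Fin d))) :=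
  {e | ∃ u v, e = s(u, v) ∧ IsPolytopeEdge d V u v}

/-- The edge cut `E(X, V ∖ X)`: crossing edges, each recorded once as an
ordered pair with first coordinate in `X` and second in `V ∖ X`. -/
def cutEdges (d : ℕ) (V X : Set (EuclideanSpace ℝ (Fin d))) :
    Set (EuclideanSpace ℝ (Fin d) × EuclideanSpace ℝ (Fin d)) :=
  {p | p.1 ∈ X ∧ p.2 ∈ V \ X ∧ IsPolytopeEdge d V p.1 p.2}

/-- The degree of a vertex `v` in the graph of the polytope `conv V`. -/
def polyDegree (d : ℕ) (V : Set (EuclideanSpace ℝ (Fin d)))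
    (v : EuclideanSpace ℝ (Fin d)) : ℕ :=
  {u | IsPolytopeEdge d V v u}.ncard

/-- `F` is a facet of the polytope `conv V`: an exposed face of dimension `d - 1`. -/
def IsFacet (d : ℕ) (V F : Set (EuclideanSpace ℝ (Fin d))) : Prop :=
  IsExposed ℝ (convexHull ℝ V) F ∧
    Module.finrank ℝ (affineSpan ℝ F).direction = d - 1

section Helpers

variable {n : ℕ} {V S : Set (EuclideanSpace ℝ (Fin n))} {u v w x : EuclideanSpace ℝ (Fin n)}

private lemma extreme_not_mem_hull
    (hx : x ∈ Set.extremePoints ℝ (convexHull ℝ V)) (hS : S ⊆ V \ {x}) :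
    x ∉ convexHull ℝ S := fun hmem =>
  ((convex_convexHull ℝ V).mem_extremePoints_iff_mem_diff_convexHull_diff.mp hx).2
    (convexHull_mono (hS.trans (Set.diff_subset_diff_left (subset_convexHull ℝ V))) hmem)

private lemma extreme_seg (hx : x ∈ Set.extremePoints ℝ (convexHull ℝ V))
    (hu : u ∈ convexHull ℝ V) (hv : v ∈ convexHull ℝ V)
    (h : x ∈ segment ℝ u v) : x = u ∨ x = v := by
  by_cases h1 : x = u
  · exact Or.inl h1
  by_cases h2 : x = v
  · exact Or.inr h2
  exact Or.inl ((hx.2 hu hv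
    (mem_openSegment_of_ne_left_right (fun h' => h1 h'.symm) (fun h' => h2 h'.symm) h)).symm)

private lemma max_weights {ι : Type} [Fintype ι] {wgt g : ι → ℝ} {M : ℝ}
    (hw0 : ∀ i, 0 ≤ wgt i) (hw1 : ∑ i, wgt i = 1)
    (hg : ∀ i, g i ≤ M) (hsum : M ≤ ∑ i, wgt i * g i) :
    ∀ i, 0 < wgt i → g i = M := by
  by_contra h
  push_neg at h
  obtain ⟨j, hj, hje⟩ := h
  have hlt : ∑ i, wgt i * g i < ∑ i, wgt i * M :=
    Finset.sum_lt_sum (fun i _ => mul_le_mul_of_nonneg_left (hg i) (hw0 i))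
      ⟨j, Finset.mem_univ j, mul_lt_mul_of_pos_left (lt_of_le_of_ne (hg j) hje) hj⟩
  rw [← Finset.sum_mul, hw1, one_mul] at hlt
  linarith

/-- If `[u,v]` is an exposed face of `conv S` and no point of `S` lies in the
segment besides `u, v`, then the segment misses `conv (S \ {u,v})`. -/
private lemma edge_disjoint (hu : u ∈ S)
    (hseg : ∀ x ∈ S, x ∈ segment ℝ u v → x = u ∨ x = v)
    (hexp : IsExposed ℝ (convexHull ℝ S) (segment ℝ u v)) :
    segment ℝ u v ∩ convexHull ℝ (S \ {u, v}) = ∅ := by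
  obtain ⟨l, hl⟩ := hexp ⟨u, left_mem_segment ℝ u v⟩
  have hu' : u ∈ {x ∈ convexHull ℝ S | ∀ y ∈ convexHull ℝ S, l y ≤ l x} := by
    rw [← hl]; exact left_mem_segment ℝ u v
  rw [Set.eq_empty_iff_forall_notMem]
  rintro p ⟨hpseg, hpC⟩
  have hp' : p ∈ {x ∈ convexHull ℝ S | ∀ y ∈ convexHull ℝ S, l y ≤ l x} := by
    rw [← hl]; exact hpseg
  rw [mem_convexHull_iff_exists_fintype] at hpC
  obtain ⟨ι, _inst, wgt, z, hw0, hw1, hz, hpeq⟩ := hpC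
  have hzS : ∀ i, z i ∈ S := fun i => (hz i).1
  have hzlt : ∀ i, l (z i) < l u := by
    intro i
    have hle : l (z i) ≤ l u := hu'.2 _ (subset_convexHull ℝ S (hzS i))
    rcases hle.lt_or_eq with h | h
    · exact h
    · exfalso
      have hzseg : z i ∈ segment ℝ u v := by
        rw [hl]
        exact ⟨subset_convexHull ℝ S (hzS i), fun y hy => (hu'.2 y hy).trans h.symm.le⟩
      rcases hseg _ (hzS i) hzseg with h1 | h1 <;> exact (hz i).2 (by simp [h1])
  have hpu : l p = l u := le_antisymm (hu'.2 p hp'.1) (hp'.2 u hu'.1)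
  have hex : ∃ j, 0 < wgt j := by
    by_contra h
    push_neg at h
    have h0 : ∑ i, wgt i = 0 := Finset.sum_eq_zero fun i _ => le_antisymm (h i) (hw0 i)
    rw [hw1] at h0
    norm_num at h0
  obtain ⟨j, hj⟩ := hex
  have hlt : ∑ i, wgt i * l (z i) < ∑ i, wgt i * l u :=
    Finset.sum_lt_sum (fun i _ => mul_le_mul_of_nonneg_left (hzlt i).le (hw0 i))
      ⟨j, Finset.mem_univ j, mul_lt_mul_of_pos_left (hzlt j) hj⟩
  have hlp : l p = ∑ i, wgt i * l (z i) := by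
    rw [← hpeq, map_sum]
    exact Finset.sum_congr rfl fun i _ => by rw [map_smul]; simp [smul_eq_mul]
  rw [← Finset.sum_mul, hw1, one_mul, ← hlp, hpu] at hlt
  exact lt_irrefl _ hlt

/-- If `u, v` are extreme points of `conv V` and the segment `[u,v]` misses
`conv (V \ {u,v})`, then `[u,v]` is an exposed face of `conv V`. -/
private lemma disjoint_edge (hV : V.Finite)
    (hu : u ∈ Set.extremePoints ℝ (convexHull ℝ V))
    (hv : v ∈ Set.extremePoints ℝ (convexHull ℝ V)) (huv : u ≠ v)
    (hdisj : segment ℝ u v ∩ convexHull ℝ (V \ {u, v}) = ∅) :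
    IsExposed ℝ (convexHull ℝ V) (segment ℝ u v) := by
  have huV : u ∈ V := extremePoints_convexHull_subset hu
  have hvV : v ∈ V := extremePoints_convexHull_subset hv
  have huc : u ∈ convexHull ℝ V := subset_convexHull ℝ V huV
  have hvc : v ∈ convexHull ℝ V := subset_convexHull ℝ V hvV
  rcases Set.eq_empty_or_nonempty (V \ {u, v}) with hVe | hVne
  · have hVeq : V = {u, v} := by
      apply Set.Subset.antisymm
      · intro y hy
        by_contra hym
        exact Set.eq_empty_iff_forall_notMem.mp hVe y ⟨hy, hym⟩
      · rintro y (rfl | rfl) <;> assumption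
    intro _
    refine ⟨0, ?_⟩
    rw [hVeq, convexHull_pair]
    ext y
    simp
  · have hBcpt : IsCompact (convexHull ℝ (V \ {u, v})) :=
      (hV.subset Set.diff_subset).isCompact_convexHull (𝕜 := ℝ)
    have hBcvx : Convex ℝ (convexHull ℝ (V \ {u, v})) := convex_convexHull ℝ _
    have hLcl : IsClosed ((line[ℝ, u, v] : AffineSubspace ℝ _) :
        Set (EuclideanSpace ℝ (Fin n))) :=
      AffineSubspace.closed_of_finiteDimensional _
    have hLcvx : Convex ℝ ((line[ℝ, u, v] : AffineSubspace ℝ _) :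
        Set (EuclideanSpace ℝ (Fin n))) := AffineSubspace.convex _
    have hdis : Disjoint (convexHull ℝ (V \ {u, v}))
        ((line[ℝ, u, v] : AffineSubspace ℝ _) : Set (EuclideanSpace ℝ (Fin n))) := by
      rw [Set.disjoint_left]
      intro p hpB hpL
      have hpc : p ∈ convexHull ℝ V := convexHull_mono Set.diff_subset hpB
      have hp' : (p - u) +ᵥ u ∈ line[ℝ, u, v] := by simpa using hpL
      obtain ⟨t, ht⟩ := vadd_left_mem_affineSpan_pair.mp hp'
      have ht' : p - u = t • (v - u) := by rw [← ht, vsub_eq_sub]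
      have hp : p = t • (v - u) + u := eq_add_of_sub_eq ht'
      rcases lt_or_ge t 0 with htn | ht0
      · have h1t : (0:ℝ) < 1 - t := by linarith
        have h1t' : (1:ℝ) - t ≠ 0 := ne_of_gt h1t
        have hop : u ∈ openSegment ℝ v p :=
          ⟨-t / (1 - t), 1 / (1 - t), div_pos (by linarith) h1t, div_pos one_pos h1t,
            by rw [← add_div, div_eq_one_iff_eq h1t']; ring,
            by rw [hp]; match_scalars <;> (try field_simp) <;> (try ring)⟩
        exact huv ((hu.2 hvc hpc hop).symm)
      rcases le_or_gt t 1 with ht1 | ht1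
      · have hpseg : p ∈ segment ℝ u v :=
          ⟨1 - t, t, by linarith, ht0, by ring, by rw [hp]; module⟩
        exact Set.eq_empty_iff_forall_notMem.mp hdisj p ⟨hpseg, hpB⟩
      · have htpos : (0:ℝ) < t := by linarith
        have hop : v ∈ openSegment ℝ u p :=
          ⟨1 - 1 / t, 1 / t, by
              have : 1 / t < 1 := by rw [div_lt_one htpos]; linarith
              linarith,
            div_pos one_pos htpos, by ring,
            by rw [hp]; match_scalars <;> (try field_simp) <;> (try ring)⟩
        exact huv ((hv.2 huc hpc hop))
    obtain ⟨f, A0, B0, hfB, hAB, hfL⟩ :=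
      geometric_hahn_banach_compact_closed hBcvx hBcpt hLcvx hLcl hdis
    have huL : u ∈ line[ℝ, u, v] := left_mem_affineSpan_pair ℝ u v
    have hfu_gt : B0 < f u := hfL u huL
    have hfeq : f v = f u := by
      by_contra hne
      have hne' : f v - f u ≠ 0 := sub_ne_zero.mpr fun h => hne h
      set t : ℝ := (B0 - 1 - f u) / (f v - f u) with htdef
      have hmem : (1 - t) • u + t • v ∈ (line[ℝ, u, v] : AffineSubspace ℝ _) := by
        have h := AffineMap.lineMap_mem_affineSpan_pair t u v
        rwa [AffineMap.lineMap_apply_module] at h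
      have hval : f ((1 - t) • u + t • v) = f u + t * (f v - f u) := by
        rw [map_add, map_smul, map_smul]
        simp only [smul_eq_mul]
        ring
      have hgt := hfL _ hmem
      rw [hval, htdef, div_mul_cancel₀ _ hne'] at hgt
      linarith
    have hmax : ∀ y ∈ convexHull ℝ V, f y ≤ f u := by
      have hcvx : Convex ℝ {z : EuclideanSpace ℝ (Fin n) | f z ≤ f u} := by
        intro x1 hx1 x2 hx2 a b ha hb hab
        simp only [Set.mem_setOf_eq] at hx1 hx2 ⊢
        have hfe : f (a • x1 + b • x2) = a * f x1 + b * f x2 := by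
          rw [map_add, map_smul, map_smul]; simp [smul_eq_mul]
        rw [hfe]
        have h1 := mul_le_mul_of_nonneg_left hx1 ha
        have h2 := mul_le_mul_of_nonneg_left hx2 hb
        have h3 : a * f u + b * f u = f u := by rw [← add_mul, hab, one_mul]
        linarith
      have hsub : V ⊆ {z : EuclideanSpace ℝ (Fin n) | f z ≤ f u} := by
        intro x hx
        by_cases hx1 : x = u
        · simp [hx1]
        by_cases hx2 : x = v
        · simp only [Set.mem_setOf_eq, hx2, hfeq, le_refl]
        · have hxB : x ∈ convexHull ℝ (V \ {u, v}) :=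
            subset_convexHull ℝ _ ⟨hx, by simp [hx1, hx2]⟩
          have := hfB x hxB
          simp only [Set.mem_setOf_eq]
          linarith
      intro y hy
      exact convexHull_min hsub hcvx hy
    intro _
    refine ⟨f, Set.Subset.antisymm ?_ ?_⟩
    · rintro x ⟨c, d, hc, hd, hcd, rfl⟩
      have hfx : f (c • u + d • v) = f u := by
        rw [map_add, map_smul, map_smul]
        simp only [smul_eq_mul, hfeq]
        linear_combination f u * hcd
      exact ⟨(convex_convexHull ℝ V).segment_subset huc hvc ⟨c, d, hc, hd, hcd, rfl⟩,
        fun y hy => by rw [hfx]; exact hmax y hy⟩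
    · rintro x ⟨hxC, hxmax⟩
      have hfx : f x = f u := le_antisymm (hmax x hxC) (hxmax u huc)
      rw [mem_convexHull_iff_exists_fintype] at hxC
      obtain ⟨ι, _inst, wgt, z, hw0, hw1, hz, hxeq⟩ := hxC
      have hsum : (∑ i, wgt i * f (z i)) = f u := by
        rw [← hfx, ← hxeq, map_sum]
        exact Finset.sum_congr rfl fun i _ => by rw [map_smul]; simp [smul_eq_mul]
      have hfz : ∀ i, f (z i) ≤ f u := fun i => hmax _ (subset_convexHull ℝ V (hz i))
      have hkey : ∀ i, 0 < wgt i → f (z i) = f u :=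
        max_weights hw0 hw1 hfz (le_of_eq hsum.symm)
      have hz2 : ∀ i, 0 < wgt i → z i ∈ ({u, v} : Set (EuclideanSpace ℝ (Fin n))) := by
        intro i hwi
        by_cases h1 : z i = u
        · simp [h1]
        by_cases h2 : z i = v
        · simp [h2]
        · exfalso
          have hmemB : z i ∈ convexHull ℝ (V \ {u, v}) :=
            subset_convexHull ℝ _ ⟨hz i, by simp [h1, h2]⟩
          have h3 := hfB _ hmemB
          have h4 := hkey i hwi
          linarith
      rw [← convexHull_pair]
      refine mem_convexHull_of_exists_fintype wgt
        (fun i => if 0 < wgt i then z i else u) hw0 hw1 ?_ ?_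
      · intro i
        by_cases hwi : 0 < wgt i
        · simp only [hwi, if_true]; exact hz2 i hwi
        · simp [hwi]
      · rw [← hxeq]
        refine Finset.sum_congr rfl fun i _ => ?_
        by_cases hwi : 0 < wgt i
        · simp [hwi]
        · have : wgt i = 0 := le_antisymm (not_lt.mp hwi) (hw0 i)
          simp [hwi, this]

end Helpers

section KeyStep

variable {n : ℕ} {V : Set (EuclideanSpace ℝ (Fin n))} {u v w : EuclideanSpace ℝ (Fin n)}

set_option maxHeartbeats 1000000 in
private lemma key_step (hV : V.Finite)
    (hext : ∀ x ∈ V, x ∈ Set.extremePoints ℝ (convexHull ℝ V))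
    (hu : u ∈ V) (hv : v ∈ V) (hw : w ∈ V)
    (huv : u ≠ v) (huw : u ≠ w) (hvw : v ≠ w)
    (hdisj : segment ℝ u v ∩ convexHull ℝ (V \ {u, v, w}) = ∅)
    {q : EuclideanSpace ℝ (Fin n)} (hq : q ∈ convexHull ℝ (V \ {u, v, w}))
    {a c : ℝ} (ha0 : 0 < a) (ha1 : a < 1) (hc0 : 0 < c) (hc1 : c < 1)
    (hE1 : a • w + (1 - a) • q = c • u + (1 - c) • v) :
    IsPolytopeEdge n V u w := by
  have hCV : V \ {u, v, w} ⊆ V := Set.diff_subset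
  have hqV : q ∈ convexHull ℝ V := convexHull_mono hCV hq
  have huc : u ∈ convexHull ℝ V := subset_convexHull ℝ V hu
  have hvc : v ∈ convexHull ℝ V := subset_convexHull ℝ V hv
  have hwc : w ∈ convexHull ℝ V := subset_convexHull ℝ V hw
  have hsubu : V \ {u, v, w} ⊆ V \ {u} := by
    intro y hy
    refine ⟨hy.1, fun h => hy.2 ?_⟩
    rw [Set.mem_singleton_iff] at h
    simp [h]
  have hsubw : V \ {u, v, w} ⊆ V \ {w} := by
    intro y hy
    refine ⟨hy.1, fun h => hy.2 ?_⟩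
    rw [Set.mem_singleton_iff] at h
    simp [h]
  refine ⟨hu, hw, huw, disjoint_edge hV (hext u hu) (hext w hw) huw ?_⟩
  rcases Set.eq_empty_or_nonempty (segment ℝ u w ∩ convexHull ℝ (V \ {u, w})) with h | h
  · exact h
  exfalso
  obtain ⟨r, hrseg, hrC⟩ := h
  have hCne : (V \ {u, v, w}).Nonempty := by
    rcases Set.eq_empty_or_nonempty (V \ {u, v, w}) with h0 | h0
    · rw [h0] at hq; simp at hq
    · exact h0
  have hset : V \ {u, w} = insert v (V \ {u, v, w}) := by
    ext y
    by_cases hyv : y = v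
    · subst hyv
      simp [hv, Ne.symm huv, hvw]
    · simp only [Set.mem_diff, Set.mem_insert_iff, Set.mem_singleton_iff, hyv, false_or] <;>
        tauto
  rw [hset, convexHull_insert hCne, mem_convexJoin] at hrC
  obtain ⟨v', hv', s, hs, hrseg2⟩ := hrC
  rw [Set.mem_singleton_iff] at hv'
  rw [hv'] at hrseg2
  have hsV : s ∈ convexHull ℝ V := convexHull_mono hCV hs
  obtain ⟨α, α', hα0, hα'0, hαs, hre⟩ := hrseg
  obtain ⟨β, β', hβ0, hβ'0, hβs, hre2⟩ := hrseg2
  -- α' ≠ 0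
  have hα'ne : α' ≠ 0 := by
    intro h0
    have hα1 : α = 1 := by linarith
    have hru : r = u := by rw [← hre, h0, hα1]; simp
    have husg : u ∈ segment ℝ v s := ⟨β, β', hβ0, hβ'0, hβs, hre2.trans hru⟩
    rcases extreme_seg (hext u hu) hvc hsV husg with h1 | h1
    · exact huv h1
    · rw [← h1] at hs
      exact extreme_not_mem_hull (hext u hu) hsubu hs
  have hαne : α ≠ 0 := by
    intro h0
    have hα'1 : α' = 1 := by linarith
    have hrw : r = w := by rw [← hre, h0, hα'1]; simp
    have hwsg : w ∈ segment ℝ v s := ⟨β, β', hβ0, hβ'0, hβs, hre2.trans hrw⟩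
    rcases extreme_seg (hext w hw) hvc hsV hwsg with h1 | h1
    · exact hvw h1.symm
    · rw [← h1] at hs
      exact extreme_not_mem_hull (hext w hw) hsubw hs
  have hβ'ne : β' ≠ 0 := by
    intro h0
    have hβ1 : β = 1 := by linarith
    have hrv : r = v := by rw [← hre2, h0, hβ1]; simp
    have hvsg : v ∈ segment ℝ u w := ⟨α, α', hα0, hα'0, hαs, hre.trans hrv⟩
    rcases extreme_seg (hext v hv) huc hwc hvsg with h1 | h1
    · exact huv h1.symm
    · exact hvw h1
  have hαpos : 0 < α := lt_of_le_of_ne hα0 (Ne.symm hαne)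
  have hα'pos : 0 < α' := lt_of_le_of_ne hα'0 (Ne.symm hα'ne)
  have hβ'pos : 0 < β' := lt_of_le_of_ne hβ'0 (Ne.symm hβ'ne)
  have hα1 : α < 1 := by linarith
  have hβ1 : β < 1 := by linarith
  have hαe : α' = 1 - α := by linarith
  have hβe : β' = 1 - β := by linarith
  subst hαe hβe
  have hE2 : α • u + (1 - α) • w = β • v + (1 - β) • s := hre.trans hre2.symm
  have key : (a * α + (1 - α) * c) • u + ((1 - α) * (1 - c) - a * β) • v
      = ((1 - α) * (1 - a)) • q + (a * (1 - β)) • s := by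
    linear_combination (norm := module) a • hE2 - (1 - α) • hE1
  have hS2pos : (0:ℝ) < (1 - α) * (1 - a) + a * (1 - β) := by nlinarith
  have hS2ne : ((1 - α) * (1 - a) + a * (1 - β) : ℝ) ≠ 0 := ne_of_gt hS2pos
  rcases le_or_gt 0 ((1 - α) * (1 - c) - a * β) with hB | hB
  · -- crossing point lies in segment u v and in conv (V \ {u,v,w})
    have hApos : (0:ℝ) ≤ a * α + (1 - α) * c := by nlinarith
    have hsum : a * α + (1 - α) * c + ((1 - α) * (1 - c) - a * β)
        = (1 - α) * (1 - a) + a * (1 - β) := by ring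
    have hTinv : (0:ℝ) ≤ ((1 - α) * (1 - a) + a * (1 - β))⁻¹ := inv_nonneg.mpr hS2pos.le
    have hx_seg : (((1 - α) * (1 - a) + a * (1 - β))⁻¹ * (a * α + (1 - α) * c)) • u
        + (((1 - α) * (1 - a) + a * (1 - β))⁻¹ * ((1 - α) * (1 - c) - a * β)) • v
        ∈ segment ℝ u v :=
      ⟨((1 - α) * (1 - a) + a * (1 - β))⁻¹ * (a * α + (1 - α) * c),
        ((1 - α) * (1 - a) + a * (1 - β))⁻¹ * ((1 - α) * (1 - c) - a * β),
        mul_nonneg hTinv hApos, mul_nonneg hTinv hB,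
        by rw [← mul_add, hsum, inv_mul_cancel₀ hS2ne], rfl⟩
    have hx_C : (((1 - α) * (1 - a) + a * (1 - β))⁻¹ * (a * α + (1 - α) * c)) • u
        + (((1 - α) * (1 - a) + a * (1 - β))⁻¹ * ((1 - α) * (1 - c) - a * β)) • v
        ∈ convexHull ℝ (V \ {u, v, w}) := by
      have hn1 : (0:ℝ) ≤ ((1 - α) * (1 - a) + a * (1 - β))⁻¹ * ((1 - α) * (1 - a)) :=
        mul_nonneg hTinv (by nlinarith)
      have hn2 : (0:ℝ) ≤ ((1 - α) * (1 - a) + a * (1 - β))⁻¹ * (a * (1 - β)) :=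
        mul_nonneg hTinv (by nlinarith)
      have hn3 : ((1 - α) * (1 - a) + a * (1 - β))⁻¹ * ((1 - α) * (1 - a))
          + ((1 - α) * (1 - a) + a * (1 - β))⁻¹ * (a * (1 - β)) = 1 := by
        rw [← mul_add, inv_mul_cancel₀ hS2ne]
      have hmem : (((1 - α) * (1 - a) + a * (1 - β))⁻¹ * ((1 - α) * (1 - a))) • q
          + (((1 - α) * (1 - a) + a * (1 - β))⁻¹ * (a * (1 - β))) • s
          ∈ convexHull ℝ (V \ {u, v, w}) :=
        (convex_convexHull ℝ _) hq hs hn1 hn2 hn3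
      have heq : (((1 - α) * (1 - a) + a * (1 - β))⁻¹ * (a * α + (1 - α) * c)) • u
          + (((1 - α) * (1 - a) + a * (1 - β))⁻¹ * ((1 - α) * (1 - c) - a * β)) • v
          = (((1 - α) * (1 - a) + a * (1 - β))⁻¹ * ((1 - α) * (1 - a))) • q
          + (((1 - α) * (1 - a) + a * (1 - β))⁻¹ * (a * (1 - β))) • s := by
        linear_combination (norm := module)
          (((1 - α) * (1 - a) + a * (1 - β))⁻¹ : ℝ) • key
      rw [heq]
      exact hmem
    exact Set.eq_empty_iff_forall_notMem.mp hdisj _ ⟨hx_seg, hx_C⟩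
  · -- u is in the open segment between v and a point of the hull
    have hApos : (0:ℝ) < a * α + (1 - α) * c := by nlinarith
    have hAne : (a * α + (1 - α) * c : ℝ) ≠ 0 := ne_of_gt hApos
    have hkey2 : (a * α + (1 - α) * c) • u
        = ((1 - α) * (1 - a)) • q + (a * (1 - β)) • s
          + (-((1 - α) * (1 - c) - a * β)) • v := by
      linear_combination (norm := module) key
    have hu_eq : u = (a * α + (1 - α) * c)⁻¹ • (((1 - α) * (1 - a)) • q
        + (a * (1 - β)) • s + (-((1 - α) * (1 - c) - a * β)) • v) := by
      rw [← hkey2, smul_smul, inv_mul_cancel₀ hAne, one_smul]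
    have hid : (a * α + (1 - α) * c : ℝ)
        = ((1 - α) * (1 - a) + a * (1 - β)) + (-((1 - α) * (1 - c) - a * β)) := by ring
    have hθpos : (0:ℝ) < (-((1 - α) * (1 - c) - a * β)) / (a * α + (1 - α) * c) :=
      div_pos (by linarith) hApos
    have hθ1 : (-((1 - α) * (1 - c) - a * β)) / (a * α + (1 - α) * c) < 1 := by
      rw [div_lt_one hApos]
      linarith
    have hn1 : (0:ℝ) ≤ ((1 - α) * (1 - a) + a * (1 - β))⁻¹ * ((1 - α) * (1 - a)) :=
      mul_nonneg (inv_nonneg.mpr hS2pos.le) (by nlinarith)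
    have hn2 : (0:ℝ) ≤ ((1 - α) * (1 - a) + a * (1 - β))⁻¹ * (a * (1 - β)) :=
      mul_nonneg (inv_nonneg.mpr hS2pos.le) (by nlinarith)
    have hn3 : ((1 - α) * (1 - a) + a * (1 - β))⁻¹ * ((1 - α) * (1 - a))
        + ((1 - α) * (1 - a) + a * (1 - β))⁻¹ * (a * (1 - β)) = 1 := by
      rw [← mul_add, inv_mul_cancel₀ hS2ne]
    have hzC : (((1 - α) * (1 - a) + a * (1 - β))⁻¹ * ((1 - α) * (1 - a))) • q
        + (((1 - α) * (1 - a) + a * (1 - β))⁻¹ * (a * (1 - β))) • s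
        ∈ convexHull ℝ (V \ {u, v, w}) :=
      (convex_convexHull ℝ _) hq hs hn1 hn2 hn3
    have hzV : (((1 - α) * (1 - a) + a * (1 - β))⁻¹ * ((1 - α) * (1 - a))) • q
        + (((1 - α) * (1 - a) + a * (1 - β))⁻¹ * (a * (1 - β))) • s
        ∈ convexHull ℝ V := convexHull_mono hCV hzC
    have hopen : u ∈ openSegment ℝ v
        ((((1 - α) * (1 - a) + a * (1 - β))⁻¹ * ((1 - α) * (1 - a))) • q
          + (((1 - α) * (1 - a) + a * (1 - β))⁻¹ * (a * (1 - β))) • s) := by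
      refine ⟨(-((1 - α) * (1 - c) - a * β)) / (a * α + (1 - α) * c),
        1 - (-((1 - α) * (1 - c) - a * β)) / (a * α + (1 - α) * c),
        hθpos, by linarith, by ring, ?_⟩
      rw [hu_eq]
      match_scalars <;> (try field_simp) <;> (try ring)
    exact huv ((hext u hu).2 hvc hzV hopen).symm

end KeyStep

set_option maxHeartbeats 1000000 in
/-- if `{u, v}` is an edge of `P' = conv (V \ {w})` but not of
`P = conv V`, then both `{u, w}` and `{v, w}` are edges of `P`. -/
theorem stmt_7 (n : ℕ) (V : Set (EuclideanSpace ℝ (Fin n))) (hV : V.Finite)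
    (hext : ∀ x ∈ V, x ∈ Set.extremePoints ℝ (convexHull ℝ V))
    (u v w : EuclideanSpace ℝ (Fin n)) (hu : u ∈ V) (hv : v ∈ V) (hw : w ∈ V)
    (huv : u ≠ v) (huw : u ≠ w) (hvw : v ≠ w)
    (hedge' : IsPolytopeEdge n (V \ {w}) u v)
    (hnedge : ¬ IsPolytopeEdge n V u v) :
    IsPolytopeEdge n V u w ∧ IsPolytopeEdge n V v w := by
  obtain ⟨hu', hv', huv', hexp'⟩ := hedge'
  have huc : u ∈ convexHull ℝ V := subset_convexHull ℝ V hu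
  have hvc : v ∈ convexHull ℝ V := subset_convexHull ℝ V hv
  have hwc : w ∈ convexHull ℝ V := subset_convexHull ℝ V hw
  have hsegmem : ∀ x ∈ V \ {w}, x ∈ segment ℝ u v → x = u ∨ x = v := fun x hx hxseg =>
    extreme_seg (hext x hx.1) huc hvc hxseg
  have hdisj0 := edge_disjoint hu' hsegmem hexp'
  have hset1 : (V \ {w}) \ {u, v} = V \ {u, v, w} := by
    ext x
    simp only [Set.mem_diff, Set.mem_insert_iff, Set.mem_singleton_iff]
    tauto
  rw [hset1] at hdisj0
  have hne : (segment ℝ u v ∩ convexHull ℝ (V \ {u, v})).Nonempty := by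
    rcases Set.eq_empty_or_nonempty (segment ℝ u v ∩ convexHull ℝ (V \ {u, v})) with h | h
    · exact absurd ⟨hu, hv, huv, disjoint_edge hV (hext u hu) (hext v hv) huv h⟩ hnedge
    · exact h
  obtain ⟨p, hpseg, hpC⟩ := hne
  have hCne : (V \ {u, v, w}).Nonempty := by
    rcases Set.eq_empty_or_nonempty (V \ {u, v, w}) with h0 | h0
    · exfalso
      have hVuv : V \ {u, v} = {w} := by
        apply Set.Subset.antisymm
        · intro x hx
          by_contra hxw
          rw [Set.mem_singleton_iff] at hxw
          refine Set.eq_empty_iff_forall_notMem.mp h0 x ⟨hx.1, ?_⟩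
          intro hmem
          simp only [Set.mem_insert_iff, Set.mem_singleton_iff] at hmem
          rcases hmem with h1 | h1 | h1
          · exact hx.2 (by simp [h1])
          · exact hx.2 (by simp [h1])
          · exact hxw h1
        · intro x hx
          rw [Set.mem_singleton_iff] at hx
          subst hx
          exact ⟨hw, by simp [Ne.symm huw, Ne.symm hvw]⟩
      rw [hVuv, convexHull_singleton, Set.mem_singleton_iff] at hpC
      rw [hpC] at hpseg
      rcases extreme_seg (hext w hw) huc hvc hpseg with h1 | h1
      · exact huw h1.symm
      · exact hvw h1.symm
    · exact h0
  have hset2 : V \ {u, v} = insert w (V \ {u, v, w}) := by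
    ext x
    by_cases hxw : x = w
    · subst hxw
      simp [hw, Ne.symm huw, Ne.symm hvw]
    · simp only [Set.mem_diff, Set.mem_insert_iff, Set.mem_singleton_iff, hxw, false_or] <;>
        tauto
  rw [hset2, convexHull_insert hCne, mem_convexJoin] at hpC
  obtain ⟨w', hw', q, hq, hpseg2⟩ := hpC
  rw [Set.mem_singleton_iff] at hw'
  rw [hw'] at hpseg2
  have hqV : q ∈ convexHull ℝ V := convexHull_mono Set.diff_subset hq
  have hsubu : V \ {u, v, w} ⊆ V \ {u} := by
    intro y hy
    refine ⟨hy.1, fun h => hy.2 ?_⟩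
    rw [Set.mem_singleton_iff] at h
    simp [h]
  have hsubv : V \ {u, v, w} ⊆ V \ {v} := by
    intro y hy
    refine ⟨hy.1, fun h => hy.2 ?_⟩
    rw [Set.mem_singleton_iff] at h
    simp [h]
  obtain ⟨a, a', ha0, ha'0, has, hpe⟩ := hpseg2
  obtain ⟨c, c', hc0, hc'0, hcs, hpe2⟩ := hpseg
  have hane : a ≠ 0 := by
    intro h0
    have ha'1 : a' = 1 := by linarith
    have hpq : p = q := by rw [← hpe, h0, ha'1]; simp
    rw [hpq] at hpe2
    refine Set.eq_empty_iff_forall_notMem.mp hdisj0 q ⟨⟨c, c', hc0, hc'0, hcs, hpe2⟩, hq⟩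
  have ha'ne : a' ≠ 0 := by
    intro h0
    have ha1 : a = 1 := by linarith
    have hpw : p = w := by rw [← hpe, h0, ha1]; simp
    rw [hpw] at hpe2
    rcases extreme_seg (hext w hw) huc hvc ⟨c, c', hc0, hc'0, hcs, hpe2⟩ with h1 | h1
    · exact huw h1.symm
    · exact hvw h1.symm
  have hcne : c ≠ 0 := by
    intro h0
    have hc'1 : c' = 1 := by linarith
    have hpv : p = v := by rw [← hpe2, h0, hc'1]; simp
    have hvsg : v ∈ segment ℝ w q := ⟨a, a', ha0, ha'0, has, hpe.trans hpv⟩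
    rcases extreme_seg (hext v hv) hwc hqV hvsg with h1 | h1
    · exact hvw h1
    · rw [← h1] at hq
      exact extreme_not_mem_hull (hext v hv) hsubv hq
  have hc'ne : c' ≠ 0 := by
    intro h0
    have hc1 : c = 1 := by linarith
    have hpu : p = u := by rw [← hpe2, h0, hc1]; simp
    have husg : u ∈ segment ℝ w q := ⟨a, a', ha0, ha'0, has, hpe.trans hpu⟩
    rcases extreme_seg (hext u hu) hwc hqV husg with h1 | h1
    · exact huw h1
    · rw [← h1] at hq
      exact extreme_not_mem_hull (hext u hu) hsubu hq
  have hapos : 0 < a := lt_of_le_of_ne ha0 (Ne.symm hane)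
  have ha'pos : 0 < a' := lt_of_le_of_ne ha'0 (Ne.symm ha'ne)
  have hcpos : 0 < c := lt_of_le_of_ne hc0 (Ne.symm hcne)
  have hc'pos : 0 < c' := lt_of_le_of_ne hc'0 (Ne.symm hc'ne)
  have ha1 : a < 1 := by linarith
  have hc1 : c < 1 := by linarith
  have hae : a' = 1 - a := by linarith
  have hce : c' = 1 - c := by linarith
  subst hae hce
  have hE1 : a • w + (1 - a) • q = c • u + (1 - c) • v := hpe.trans hpe2.symm
  constructor
  · exact key_step hV hext hu hv hw huv huw hvw hdisj0 hq hapos ha1 hcpos hc1 hE1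
  · have hset3 : V \ {v, u, w} = V \ {u, v, w} := by
      ext x
      simp only [Set.mem_diff, Set.mem_insert_iff, Set.mem_singleton_iff]
      tauto
    have hdisj0' : segment ℝ v u ∩ convexHull ℝ (V \ {v, u, w}) = ∅ := by
      rw [segment_symm, hset3]
      exact hdisj0
    have hq' : q ∈ convexHull ℝ (V \ {v, u, w}) := by
      rw [hset3]
      exact hq
    have hE1' : a • w + (1 - a) • q = (1 - c) • v + (1 - (1 - c)) • u := by
      linear_combination (norm := module) hE1
    exact key_step hV hext hv hu hw (Ne.symm huv) hvw huw hdisj0' hq'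
      hapos ha1 (by linarith) (by linarith) hE1'

end
end

section
/- Let G be a finite simple graph with minimum degree δ, and let E(X, X̄) be a nontrivial minimum edge cut of G. Then |X| ≥ δ and |X̄| ≥ δ. -/
open Set

noncomputable section

/-- if a finite simple graph with minimum degree `δ` has a
nontrivial minimum edge cut `E(X, Xᶜ)`, then `|X| ≥ δ` and `|Xᶜ| ≥ δ`. -/
theorem stmt_8 {V : Type*} [Fintype V] (G : SimpleGraph V) [DecidableRel G.Adj]
    (δ : ℕ) (hδle : ∀ v : V, δ ≤ G.degree v) (hδmem : ∃ v : V, G.degree v = δ)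
    (X : Set V) (hX : X.Nonempty) (hXc : Xᶜ.Nonempty)
    (hnt : (∀ x, X ≠ {x}) ∧ (∀ x, Xᶜ ≠ {x}))
    (hmin : ∀ Y : Set V, Y.Nonempty → Yᶜ.Nonempty →
      {p : V × V | p.1 ∈ X ∧ p.2 ∈ Xᶜ ∧ G.Adj p.1 p.2}.ncard ≤
        {p : V × V | p.1 ∈ Y ∧ p.2 ∈ Yᶜ ∧ G.Adj p.1 p.2}.ncard) :
    δ ≤ X.ncard ∧ δ ≤ Xᶜ.ncard := by
  classical
  obtain ⟨v, hv⟩ := hδmem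
  obtain ⟨a, ha⟩ := hX
  obtain ⟨b, hb⟩ := hXc
  have hab : a ≠ b := fun h => hb (h ▸ ha)
  -- every singleton has nonempty complement
  have hcompl : ∀ w : V, ({w} : Set V)ᶜ.Nonempty := by
    intro w
    rcases eq_or_ne w a with rfl | h
    · exact ⟨b, by simpa using hab.symm⟩
    · exact ⟨a, by simpa using h.symm⟩
  -- the singleton cut around v has exactly `degree v = δ` edges
  have hsing : {p : V × V | p.1 ∈ ({v} : Set V) ∧ p.2 ∈ ({v} : Set V)ᶜ ∧ G.Adj p.1 p.2}.ncard
      = G.degree v := by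
    have hset : {p : V × V | p.1 ∈ ({v} : Set V) ∧ p.2 ∈ ({v} : Set V)ᶜ ∧ G.Adj p.1 p.2}
        = (fun u => (v, u)) '' (G.neighborSet v) := by
      ext ⟨x, y⟩
      simp only [Set.mem_setOf_eq, Set.mem_image, Set.mem_singleton_iff, Set.mem_compl_iff,
        SimpleGraph.mem_neighborSet, Prod.mk.injEq]
      constructor
      · rintro ⟨rfl, _, h⟩; exact ⟨y, h, rfl, rfl⟩
      · rintro ⟨u, h, rfl, rfl⟩; exact ⟨rfl, (G.ne_of_adj h).symm, h⟩
    rw [hset, Set.ncard_image_of_injective _ (fun u₁ u₂ h => (Prod.mk.injEq _ _ _ _ ▸ h).2),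
      Set.ncard_eq_toFinset_card']
    rfl
  -- the cut is at most δ
  have hcut_le : {p : V × V | p.1 ∈ X ∧ p.2 ∈ Xᶜ ∧ G.Adj p.1 p.2}.ncard ≤ δ := by
    have := hmin {v} ⟨v, rfl⟩ (hcompl v)
    rw [hsing, hv] at this
    exact this
  -- counting lower bound for any cut
  have key : ∀ Y : Set V,
      Y.ncard * (δ + 1 - Y.ncard) ≤ {p : V × V | p.1 ∈ Y ∧ p.2 ∈ Yᶜ ∧ G.Adj p.1 p.2}.ncard := by
    intro Y
    have hYfin : Y.Finite := Y.toFinite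
    set YF : Finset V := hYfin.toFinset with hYFdef
    have hYcard : Y.ncard = YF.card := Set.ncard_eq_toFinset_card Y hYfin
    set SF : Finset (V × V) :=
      Finset.univ.filter (fun p : V × V => p.1 ∈ Y ∧ p.2 ∈ Yᶜ ∧ G.Adj p.1 p.2) with hSFdef
    have hS : {p : V × V | p.1 ∈ Y ∧ p.2 ∈ Yᶜ ∧ G.Adj p.1 p.2} = ↑SF := by
      ext p; simp [hSFdef]
    rw [hS, Set.ncard_coe_finset]
    set T : Finset (V × V) :=
      YF.biUnion (fun x => (G.neighborFinset x \ YF).image (fun y => (x, y))) with hTdef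
    have hTsub : T ⊆ SF := by
      intro p hp
      simp only [hTdef, Finset.mem_biUnion, Finset.mem_image, Finset.mem_sdiff,
        SimpleGraph.mem_neighborFinset, Set.Finite.mem_toFinset, hYFdef] at hp
      obtain ⟨x, hxY, y, ⟨hadj, hyY⟩, rfl⟩ := hp
      simp only [hSFdef, Finset.mem_filter, Finset.mem_univ, true_and]
      exact ⟨hxY, hyY, hadj⟩
    have hTcard : T.card = ∑ x ∈ YF, (G.neighborFinset x \ YF).card := by
      rw [hTdef, Finset.card_biUnion]
      · refine Finset.sum_congr rfl (fun x _ => ?_)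
        exact Finset.card_image_of_injective _ (fun y₁ y₂ h => (Prod.mk.injEq _ _ _ _ ▸ h).2)
      · intro x hx x' hx' hne
        simp only [Finset.disjoint_left, Finset.mem_image]
        rintro p ⟨y, _, rfl⟩ ⟨y', _, h⟩
        exact hne ((Prod.mk.injEq _ _ _ _ ▸ h).1.symm)
    have hper : ∀ x ∈ YF, δ + 1 - YF.card ≤ (G.neighborFinset x \ YF).card := by
      intro x hx
      have h1 : (G.neighborFinset x ∩ YF).card ≤ YF.card - 1 := by
        have hsub : G.neighborFinset x ∩ YF ⊆ YF.erase x := by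
          intro y hy
          rw [Finset.mem_inter, SimpleGraph.mem_neighborFinset] at hy
          exact Finset.mem_erase.2 ⟨(G.ne_of_adj hy.1).symm, hy.2⟩
        calc (G.neighborFinset x ∩ YF).card ≤ (YF.erase x).card := Finset.card_le_card hsub
          _ = YF.card - 1 := Finset.card_erase_of_mem hx
      have h2 : G.degree x ≤ (G.neighborFinset x \ YF).card + (G.neighborFinset x ∩ YF).card := by
        rw [← SimpleGraph.card_neighborFinset_eq_degree,
          Finset.card_sdiff_add_card_inter]
      have h3 : δ ≤ G.degree x := hδle x
      have h4 : 1 ≤ YF.card := Finset.card_pos.2 ⟨x, hx⟩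
      omega
    calc Y.ncard * (δ + 1 - Y.ncard) = ∑ _x ∈ YF, (δ + 1 - YF.card) := by
          rw [Finset.sum_const, smul_eq_mul, hYcard]
      _ ≤ ∑ x ∈ YF, (G.neighborFinset x \ YF).card := Finset.sum_le_sum hper
      _ = T.card := hTcard.symm
      _ ≤ SF.card := Finset.card_le_card hTsub
  -- the cut of Xᶜ equals the cut of X
  have hswap : {p : V × V | p.1 ∈ Xᶜ ∧ p.2 ∈ Xᶜᶜ ∧ G.Adj p.1 p.2}.ncard
      = {p : V × V | p.1 ∈ X ∧ p.2 ∈ Xᶜ ∧ G.Adj p.1 p.2}.ncard := by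
    have hset : {p : V × V | p.1 ∈ Xᶜ ∧ p.2 ∈ Xᶜᶜ ∧ G.Adj p.1 p.2}
        = Prod.swap '' {p : V × V | p.1 ∈ X ∧ p.2 ∈ Xᶜ ∧ G.Adj p.1 p.2} := by
      ext ⟨x, y⟩
      simp only [Set.mem_setOf_eq, Set.image_swap_eq_preimage_swap, Set.mem_preimage,
        Prod.swap_prod_mk, compl_compl]
      constructor
      · rintro ⟨h1, h2, h3⟩; exact ⟨h2, h1, h3.symm⟩
      · rintro ⟨h1, h2, h3⟩; exact ⟨h2, h1, h3.symm⟩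
    rw [hset, Set.ncard_image_of_injective _ Prod.swap_injective]
  -- |X| ≥ 2 and |Xᶜ| ≥ 2
  have two_le : ∀ Y : Set V, Y.Nonempty → (∀ x, Y ≠ {x}) → 2 ≤ Y.ncard := by
    intro Y hne hns
    have h0 : 0 < Y.ncard := (Set.ncard_pos (Y.toFinite)).2 hne
    have h1 : Y.ncard ≠ 1 := by
      intro h
      obtain ⟨x, hx⟩ := Set.ncard_eq_one.1 h
      exact hns x hx
    omega
  have h2X : 2 ≤ X.ncard := two_le X ⟨a, ha⟩ hnt.1
  have h2Xc : 2 ≤ Xᶜ.ncard := two_le Xᶜ ⟨b, hb⟩ hnt.2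
  -- arithmetic conclusion
  have harith : ∀ k : ℕ, 2 ≤ k → k * (δ + 1 - k) ≤ δ → δ ≤ k := by
    intro k hk hle
    by_contra hlt
    push_neg at hlt
    set m := δ + 1 - k with hm
    have hkm : k + m = δ + 1 := by omega
    have hm2 : 2 ≤ m := by omega
    nlinarith
  constructor
  · exact harith X.ncard h2X (le_trans (key X) hcut_le)
  · exact harith Xᶜ.ncard h2Xc (le_trans (key Xᶜ) (hswap ▸ hcut_le))

end
end
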